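/- Let φ ∈ Γ^Sub, let α be an atomic mapping for Γ^Sub, and let U be the simulation base determined by α. Then for every epistemically adequate base B extending U: ⊩⁺_B φ if and only if ⊢⁺_B p^φ, and ⊩⁻_B φ if and only if ⊢⁻_B p^φ. -/
import Mathlib


/-- Atomic propositions; the set `At` includes the units `⊥` and `⊤`. -/
inductive Atom : Type where
  | bot : Atom
  | top : Atom
  | prop : ℕ → Atom
deriving DecidableEq

/-- Formulas over `At`, built with `∧`, `∨`, `→` and co-implication `↤`. -/
inductive Formula : Type where
  | atom : Atom → Formula
  | conj : Formula → Formula → Formula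
  | disj : Formula → Formula → Formula
  | impl : Formula → Formula → Formula
  | coimpl : Formula → Formula → Formula
deriving DecidableEq

abbrev Formula.bot : Formula := .atom .bot
abbrev Formula.top : Formula := .atom .top

/-- A formula is atomic iff it is a member of `At` (including `⊥` and `⊤`). -/
def Formula.isAtomic : Formula → Prop
  | .atom _ => True
  | _ => False

/-- Polarity of a statement: proof (`pos`) or refutation (`neg`). -/
inductive Side : Type where
  | pos : Side
  | neg : Side
deriving DecidableEq

/-- The set of subformulas of a formula. -/
def Formula.subf : Formula → Set Formula
  | .atom a => {.atom a}
  | .conj φ ψ => insert (.conj φ ψ) (φ.subf ∪ ψ.subf)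
  | .disj φ ψ => insert (.disj φ ψ) (φ.subf ∪ ψ.subf)
  | .impl φ ψ => insert (.impl φ ψ) (φ.subf ∪ ψ.subf)
  | .coimpl φ ψ => insert (.coimpl φ ψ) (φ.subf ∪ ψ.subf)

/-- A premise of an atomic rule: a set of discharged atomic proof hypotheses,
a set of discharged atomic refutation hypotheses, a polarity, and an atom. -/
structure APrem : Type where
  hypP : Set Atom
  hypN : Set Atom
  side : Side
  conc : Atom

/-- An atomic rule: finitely many premises and an atomic conclusion, concluded
either as a proof (`side = pos`) or as a refutation (`side = neg`).
A rule with no premises is an axiom. -/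
structure AtomicRule : Type where
  prems : List APrem
  side : Side
  conc : Atom

/-- A bilateral atomic system (base) is a set of atomic rules. -/
abbrev Base : Type := Set AtomicRule

/-- Atomic derivability over a base `B`, from atomic proof hypotheses `Γ` and atomic
refutation hypotheses `Δ`. -/
inductive AtDeriv (B : Base) : Set Atom → Set Atom → Side → Atom → Prop where
  | hypP {Γ Δ : Set Atom} {p : Atom} (h : p ∈ Γ) : AtDeriv B Γ Δ .pos p
  | hypN {Γ Δ : Set Atom} {p : Atom} (h : p ∈ Δ) : AtDeriv B Γ Δ .neg p
  | app {Γ Δ : Set Atom} {r : AtomicRule} (hr : r ∈ B)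
      (h : ∀ pr ∈ r.prems, AtDeriv B (Γ ∪ pr.hypP) (Δ ∪ pr.hypN) pr.side pr.conc) :
      AtDeriv B Γ Δ r.side r.conc

/-- `⊢⁺_B p` / `⊢⁻_B p`: closed atomic derivability in `B`. -/
def AtProves (B : Base) (s : Side) (p : Atom) : Prop := AtDeriv B ∅ ∅ s p

/-- `B` is logically consistent: not `⊢⁺_B ⊥` and not `⊢⁻_B ⊤`. -/
def LogConsistent (B : Base) : Prop := ¬ AtProves B .pos .bot ∧ ¬ AtProves B .neg .top

/-- `B` is unit complete: it contains a proof axiom concluding `⊤` and a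
refutation axiom concluding `⊥`. -/
def UnitComplete (B : Base) : Prop :=
  (⟨[], .pos, .top⟩ : AtomicRule) ∈ B ∧ (⟨[], .neg, .bot⟩ : AtomicRule) ∈ B

/-- `B` is epistemically consistent: for every atom `p`, it contains the rules
concluding a proof of `⊥`, resp. a refutation of `⊤`, from a proof of `p` and a
refutation of `p`. -/
def EpiConsistent (B : Base) : Prop := ∀ p : Atom,
  (⟨[⟨∅, ∅, .pos, p⟩, ⟨∅, ∅, .neg, p⟩], .pos, .bot⟩ : AtomicRule) ∈ B ∧
  (⟨[⟨∅, ∅, .pos, p⟩, ⟨∅, ∅, .neg, p⟩], .neg, .top⟩ : AtomicRule) ∈ B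

/-- `B` is epistemically adequate. -/
def Adequate (B : Base) : Prop := LogConsistent B ∧ UnitComplete B ∧ EpiConsistent B

/-- Bilateral support `⊩^±_B φ` (for epistemically adequate bases). -/
def Support (B : Base) (s : Side) (φ : Formula) : Prop :=
  match s, φ with
  | s, .atom a => AtDeriv B ∅ ∅ s a
  | .pos, .conj φ ψ => Support B .pos φ ∧ Support B .pos ψ
  | .neg, .conj φ ψ => ∀ C : Base, Adequate C → B ⊆ C → ∀ p : Atom,
      ((∀ D : Base, Adequate D → C ⊆ D → Support D .neg φ → AtDeriv D ∅ ∅ .pos p) →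
       (∀ D : Base, Adequate D → C ⊆ D → Support D .neg ψ → AtDeriv D ∅ ∅ .pos p) →
        AtDeriv C ∅ ∅ .pos p) ∧
      ((∀ D : Base, Adequate D → C ⊆ D → Support D .neg φ → AtDeriv D ∅ ∅ .neg p) →
       (∀ D : Base, Adequate D → C ⊆ D → Support D .neg ψ → AtDeriv D ∅ ∅ .neg p) →
        AtDeriv C ∅ ∅ .neg p)
  | .pos, .disj φ ψ => ∀ C : Base, Adequate C → B ⊆ C → ∀ p : Atom,
      ((∀ D : Base, Adequate D → C ⊆ D → Support D .pos φ → AtDeriv D ∅ ∅ .pos p) →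
       (∀ D : Base, Adequate D → C ⊆ D → Support D .pos ψ → AtDeriv D ∅ ∅ .pos p) →
        AtDeriv C ∅ ∅ .pos p) ∧
      ((∀ D : Base, Adequate D → C ⊆ D → Support D .pos φ → AtDeriv D ∅ ∅ .neg p) →
       (∀ D : Base, Adequate D → C ⊆ D → Support D .pos ψ → AtDeriv D ∅ ∅ .neg p) →
        AtDeriv C ∅ ∅ .neg p)
  | .neg, .disj φ ψ => Support B .neg φ ∧ Support B .neg ψ
  | .pos, .impl φ ψ => ∀ C : Base, Adequate C → B ⊆ C → Support C .pos φ → Support C .pos ψ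
  | .neg, .impl φ ψ => Support B .pos φ ∧ Support B .neg ψ
  | .pos, .coimpl φ ψ => Support B .pos φ ∧ Support B .neg ψ
  | .neg, .coimpl φ ψ => ∀ C : Base, Adequate C → B ⊆ C → Support C .neg ψ → Support C .neg φ
termination_by sizeOf φ

/-- `Γ;Δ ⊩^±_B φ`: support of `φ` from proof assumptions `Γ` and refutation
assumptions `Δ` relative to the (adequate) base `B`. For empty `Γ` and `Δ` this is
plain support; for nonempty `Γ ∪ Δ` it is given by the clauses (Inf +)/(Inf −). -/
def SupportSeq (B : Base) (Γ Δ : Set Formula) (s : Side) (φ : Formula) : Prop :=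
  (Γ = ∅ ∧ Δ = ∅ ∧ Support B s φ) ∨
  ((Γ ∪ Δ).Nonempty ∧
    ∀ C : Base, Adequate C → B ⊆ C →
      (∀ γ ∈ Γ, Support C .pos γ) → (∀ δ ∈ Δ, Support C .neg δ) → Support C s φ)

/-- `Γ;Δ ⊩^± φ`: support relative to every epistemically adequate base. -/
def Valid (Γ Δ : Set Formula) (s : Side) (φ : Formula) : Prop :=
  ∀ B : Base, Adequate B → SupportSeq B Γ Δ s φ

/-- `Θ^Sub`: the set of subformulas of members of `Θ`. -/
def subClosure (Θ : Set Formula) : Set Formula := ⋃ φ ∈ Θ, φ.subf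

/-- An atomic mapping for `Θ^Sub`: an injective map into `At` fixing the atoms of
`Θ^Sub` (behaviour outside `Θ^Sub` is irrelevant). `α.toFun φ` is the atom `p^φ`. -/
structure AtomicMapping (Θ : Set Formula) : Type where
  toFun : Formula → Atom
  injOn : Set.InjOn toFun (subClosure Θ)
  fixAtom : ∀ a : Atom, Formula.atom a ∈ subClosure Θ → toFun (.atom a) = a

namespace Sim

variable (α : Formula → Atom)

/-- An undischarging atomic premise. -/
def pp (s : Side) (a : Atom) : APrem := ⟨∅, ∅, s, a⟩

/- Atomic rules mimicking the natural deduction rules of `BPR`. -/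
def andIP (φ ψ : Formula) : AtomicRule := ⟨[pp .pos (α φ), pp .pos (α ψ)], .pos, α (.conj φ ψ)⟩
def andE1P (φ ψ : Formula) : AtomicRule := ⟨[pp .pos (α (.conj φ ψ))], .pos, α φ⟩
def andE2P (φ ψ : Formula) : AtomicRule := ⟨[pp .pos (α (.conj φ ψ))], .pos, α ψ⟩
def andI1N (φ ψ : Formula) : AtomicRule := ⟨[pp .neg (α φ)], .neg, α (.conj φ ψ)⟩
def andI2N (φ ψ : Formula) : AtomicRule := ⟨[pp .neg (α ψ)], .neg, α (.conj φ ψ)⟩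
def andEN (φ ψ : Formula) (s : Side) (q : Atom) : AtomicRule :=
  ⟨[pp .neg (α (.conj φ ψ)), ⟨∅, {α φ}, s, q⟩, ⟨∅, {α ψ}, s, q⟩], s, q⟩
def orI1P (φ ψ : Formula) : AtomicRule := ⟨[pp .pos (α φ)], .pos, α (.disj φ ψ)⟩
def orI2P (φ ψ : Formula) : AtomicRule := ⟨[pp .pos (α ψ)], .pos, α (.disj φ ψ)⟩
def orEP (φ ψ : Formula) (s : Side) (q : Atom) : AtomicRule :=
  ⟨[pp .pos (α (.disj φ ψ)), ⟨{α φ}, ∅, s, q⟩, ⟨{α ψ}, ∅, s, q⟩], s, q⟩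
def orIN (φ ψ : Formula) : AtomicRule := ⟨[pp .neg (α φ), pp .neg (α ψ)], .neg, α (.disj φ ψ)⟩
def orE1N (φ ψ : Formula) : AtomicRule := ⟨[pp .neg (α (.disj φ ψ))], .neg, α φ⟩
def orE2N (φ ψ : Formula) : AtomicRule := ⟨[pp .neg (α (.disj φ ψ))], .neg, α ψ⟩
def impIP (φ ψ : Formula) : AtomicRule := ⟨[⟨{α φ}, ∅, .pos, α ψ⟩], .pos, α (.impl φ ψ)⟩
def impEP (φ ψ : Formula) : AtomicRule :=
  ⟨[pp .pos (α (.impl φ ψ)), pp .pos (α φ)], .pos, α ψ⟩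
def impIN (φ ψ : Formula) : AtomicRule :=
  ⟨[pp .pos (α φ), pp .neg (α ψ)], .neg, α (.impl φ ψ)⟩
def impE1N (φ ψ : Formula) : AtomicRule := ⟨[pp .neg (α (.impl φ ψ))], .pos, α φ⟩
def impE2N (φ ψ : Formula) : AtomicRule := ⟨[pp .neg (α (.impl φ ψ))], .neg, α ψ⟩
def coimpIP (φ ψ : Formula) : AtomicRule :=
  ⟨[pp .pos (α φ), pp .neg (α ψ)], .pos, α (.coimpl φ ψ)⟩
def coimpE1P (φ ψ : Formula) : AtomicRule := ⟨[pp .pos (α (.coimpl φ ψ))], .pos, α φ⟩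
def coimpE2P (φ ψ : Formula) : AtomicRule := ⟨[pp .pos (α (.coimpl φ ψ))], .neg, α ψ⟩
def coimpIN (φ ψ : Formula) : AtomicRule := ⟨[⟨∅, {α ψ}, .neg, α φ⟩], .neg, α (.coimpl φ ψ)⟩
def coimpEN (φ ψ : Formula) : AtomicRule :=
  ⟨[pp .neg (α (.coimpl φ ψ)), pp .neg (α ψ)], .neg, α φ⟩
def topAx : AtomicRule := ⟨[], .pos, .top⟩
def botAx : AtomicRule := ⟨[], .neg, .bot⟩
def botP (s : Side) (q : Atom) : AtomicRule := ⟨[pp .pos .bot], s, q⟩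
def topN (s : Side) (q : Atom) : AtomicRule := ⟨[pp .neg .top], s, q⟩
def prP (φ : Formula) (q : Atom) : AtomicRule := ⟨[pp .pos (α φ), pp .neg (α φ)], .pos, q⟩
def prN (φ : Formula) (q : Atom) : AtomicRule := ⟨[pp .pos (α φ), pp .neg (α φ)], .neg, q⟩

end Sim

/-- Membership in the simulation base determined by the atomic mapping `α` for
`Θ^Sub`: atomic rules mimicking every natural deduction rule of `BPR` for the
formulas of `Θ^Sub`, together with the rules `PR(+),p` and `PR(−),p` for each
`φ ∈ Θ^Sub`. -/
inductive SimRule (Θ : Set Formula) (α : Formula → Atom) : AtomicRule → Prop where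
  | topAx : SimRule Θ α (Sim.topAx)
  | botAx : SimRule Θ α (Sim.botAx)
  | botP (s : Side) (q : Atom) : SimRule Θ α (Sim.botP s q)
  | topN (s : Side) (q : Atom) : SimRule Θ α (Sim.topN s q)
  | andIP {φ ψ} (h : Formula.conj φ ψ ∈ subClosure Θ) : SimRule Θ α (Sim.andIP α φ ψ)
  | andE1P {φ ψ} (h : Formula.conj φ ψ ∈ subClosure Θ) : SimRule Θ α (Sim.andE1P α φ ψ)
  | andE2P {φ ψ} (h : Formula.conj φ ψ ∈ subClosure Θ) : SimRule Θ α (Sim.andE2P α φ ψ)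
  | andI1N {φ ψ} (h : Formula.conj φ ψ ∈ subClosure Θ) : SimRule Θ α (Sim.andI1N α φ ψ)
  | andI2N {φ ψ} (h : Formula.conj φ ψ ∈ subClosure Θ) : SimRule Θ α (Sim.andI2N α φ ψ)
  | andEN {φ ψ} (h : Formula.conj φ ψ ∈ subClosure Θ) (s : Side) (q : Atom) :
      SimRule Θ α (Sim.andEN α φ ψ s q)
  | orI1P {φ ψ} (h : Formula.disj φ ψ ∈ subClosure Θ) : SimRule Θ α (Sim.orI1P α φ ψ)
  | orI2P {φ ψ} (h : Formula.disj φ ψ ∈ subClosure Θ) : SimRule Θ α (Sim.orI2P α φ ψ)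
  | orEP {φ ψ} (h : Formula.disj φ ψ ∈ subClosure Θ) (s : Side) (q : Atom) :
      SimRule Θ α (Sim.orEP α φ ψ s q)
  | orIN {φ ψ} (h : Formula.disj φ ψ ∈ subClosure Θ) : SimRule Θ α (Sim.orIN α φ ψ)
  | orE1N {φ ψ} (h : Formula.disj φ ψ ∈ subClosure Θ) : SimRule Θ α (Sim.orE1N α φ ψ)
  | orE2N {φ ψ} (h : Formula.disj φ ψ ∈ subClosure Θ) : SimRule Θ α (Sim.orE2N α φ ψ)
  | impIP {φ ψ} (h : Formula.impl φ ψ ∈ subClosure Θ) : SimRule Θ α (Sim.impIP α φ ψ)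
  | impEP {φ ψ} (h : Formula.impl φ ψ ∈ subClosure Θ) : SimRule Θ α (Sim.impEP α φ ψ)
  | impIN {φ ψ} (h : Formula.impl φ ψ ∈ subClosure Θ) : SimRule Θ α (Sim.impIN α φ ψ)
  | impE1N {φ ψ} (h : Formula.impl φ ψ ∈ subClosure Θ) : SimRule Θ α (Sim.impE1N α φ ψ)
  | impE2N {φ ψ} (h : Formula.impl φ ψ ∈ subClosure Θ) : SimRule Θ α (Sim.impE2N α φ ψ)
  | coimpIP {φ ψ} (h : Formula.coimpl φ ψ ∈ subClosure Θ) : SimRule Θ α (Sim.coimpIP α φ ψ)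
  | coimpE1P {φ ψ} (h : Formula.coimpl φ ψ ∈ subClosure Θ) : SimRule Θ α (Sim.coimpE1P α φ ψ)
  | coimpE2P {φ ψ} (h : Formula.coimpl φ ψ ∈ subClosure Θ) : SimRule Θ α (Sim.coimpE2P α φ ψ)
  | coimpIN {φ ψ} (h : Formula.coimpl φ ψ ∈ subClosure Θ) : SimRule Θ α (Sim.coimpIN α φ ψ)
  | coimpEN {φ ψ} (h : Formula.coimpl φ ψ ∈ subClosure Θ) : SimRule Θ α (Sim.coimpEN α φ ψ)
  | prP {φ} (h : φ ∈ subClosure Θ) (q : Atom) : SimRule Θ α (Sim.prP α φ q)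
  | prN {φ} (h : φ ∈ subClosure Θ) (q : Atom) : SimRule Θ α (Sim.prN α φ q)

/-- The simulation base `U` determined by the atomic mapping `α` for `Θ^Sub`. -/
def SimBase (Θ : Set Formula) (α : Formula → Atom) : Base := { r | SimRule Θ α r }


namespace Aux

lemma AtDeriv.mono {B B' : Base} {Γ Γ' Δ Δ' : Set Atom} {s p}
    (hB : B ⊆ B') (hΓ : Γ ⊆ Γ') (hΔ : Δ ⊆ Δ')
    (h : AtDeriv B Γ Δ s p) : AtDeriv B' Γ' Δ' s p := by
  induction h generalizing Γ' Δ' with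
  | hypP h => exact .hypP (hΓ h)
  | hypN h => exact .hypN (hΔ h)
  | app hr h ih =>
    exact .app (hB hr) fun pr hpr =>
      ih pr hpr (Set.union_subset_union_left _ hΓ) (Set.union_subset_union_left _ hΔ)

lemma cutPos {C : Base} {a : Atom} {Γ Δ : Set Atom} {s p}
    (h : AtDeriv (insert (⟨[], .pos, a⟩ : AtomicRule) C) Γ Δ s p) :
    AtDeriv C (insert a Γ) Δ s p := by
  induction h with
  | hypP h => exact .hypP (Set.mem_insert_of_mem _ h)
  | hypN h => exact .hypN h
  | app hr h ih =>
    rcases Set.mem_insert_iff.mp hr with rfl | hr'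
    · exact .hypP (Set.mem_insert _ _)
    · exact .app hr' fun pr hpr => by
        have := ih pr hpr
        rwa [Set.insert_union]

lemma cutNeg {C : Base} {a : Atom} {Γ Δ : Set Atom} {s p}
    (h : AtDeriv (insert (⟨[], .neg, a⟩ : AtomicRule) C) Γ Δ s p) :
    AtDeriv C Γ (insert a Δ) s p := by
  induction h with
  | hypP h => exact .hypP h
  | hypN h => exact .hypN (Set.mem_insert_of_mem _ h)
  | app hr h ih =>
    rcases Set.mem_insert_iff.mp hr with rfl | hr'
    · exact .hypN (Set.mem_insert _ _)
    · exact .app hr' fun pr hpr => by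
        have := ih pr hpr
        rwa [Set.insert_union]

variable {ΓF : Set Formula} {αf : Formula → Atom}

lemma fromBot {C : Base} (hU : SimBase ΓF αf ⊆ C) {Γ Δ : Set Atom} {s : Side} {q : Atom}
    (h : AtDeriv C Γ Δ .pos .bot) : AtDeriv C Γ Δ s q := by
  refine AtDeriv.app (hU (SimRule.botP s q)) fun pr hpr => ?_
  simp only [Sim.botP, Sim.pp, List.mem_singleton] at hpr
  subst hpr
  simpa using h

lemma fromTop {C : Base} (hU : SimBase ΓF αf ⊆ C) {Γ Δ : Set Atom} {s : Side} {q : Atom}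
    (h : AtDeriv C Γ Δ .neg .top) : AtDeriv C Γ Δ s q := by
  refine AtDeriv.app (hU (SimRule.topN s q)) fun pr hpr => ?_
  simp only [Sim.topN, Sim.pp, List.mem_singleton] at hpr
  subst hpr
  simpa using h

lemma keyNeg {C : Base} (hC : Adequate C) (hU : SimBase ΓF αf ⊆ C) {a q : Atom} {s : Side}
    (H : ∀ D : Base, Adequate D → C ⊆ D → AtDeriv D ∅ ∅ .neg a → AtDeriv D ∅ ∅ s q) :
    AtDeriv C ∅ {a} s q := by
  set C' : Base := insert (⟨[], .neg, a⟩ : AtomicRule) C with hC'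
  by_cases hb : AtProves C' .pos .bot
  · have := cutNeg hb
    exact fromBot hU (by simpa using this)
  · by_cases ht : AtProves C' .neg .top
    · have := cutNeg ht
      exact fromTop hU (by simpa using this)
    · have hC'a : Adequate C' := by
        refine ⟨⟨hb, ht⟩, ⟨Set.mem_insert_of_mem _ hC.2.1.1, Set.mem_insert_of_mem _ hC.2.1.2⟩,
          fun p => ⟨Set.mem_insert_of_mem _ (hC.2.2 p).1, Set.mem_insert_of_mem _ (hC.2.2 p).2⟩⟩
      have hd : AtDeriv C' ∅ ∅ .neg a :=
        AtDeriv.app (r := ⟨[], .neg, a⟩) (Set.mem_insert _ _) (by intro pr hpr; simp at hpr)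
      have := cutNeg (H C' hC'a (Set.subset_insert _ _) hd)
      simpa using this

lemma keyPos {C : Base} (hC : Adequate C) (hU : SimBase ΓF αf ⊆ C) {a q : Atom} {s : Side}
    (H : ∀ D : Base, Adequate D → C ⊆ D → AtDeriv D ∅ ∅ .pos a → AtDeriv D ∅ ∅ s q) :
    AtDeriv C {a} ∅ s q := by
  set C' : Base := insert (⟨[], .pos, a⟩ : AtomicRule) C with hC'
  by_cases hb : AtProves C' .pos .bot
  · have := cutPos hb
    exact fromBot hU (by simpa using this)
  · by_cases ht : AtProves C' .neg .top
    · have := cutPos ht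
      exact fromTop hU (by simpa using this)
    · have hC'a : Adequate C' := by
        refine ⟨⟨hb, ht⟩, ⟨Set.mem_insert_of_mem _ hC.2.1.1, Set.mem_insert_of_mem _ hC.2.1.2⟩,
          fun p => ⟨Set.mem_insert_of_mem _ (hC.2.2 p).1, Set.mem_insert_of_mem _ (hC.2.2 p).2⟩⟩
      have hd : AtDeriv C' ∅ ∅ .pos a :=
        AtDeriv.app (r := ⟨[], .pos, a⟩) (Set.mem_insert _ _) (by intro pr hpr; simp at hpr)
      have := cutPos (H C' hC'a (Set.subset_insert _ _) hd)
      simpa using this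

lemma self_mem_subf (φ : Formula) : φ ∈ φ.subf := by
  cases φ <;> simp [Formula.subf]

lemma subf_trans {ψ χ : Formula} (h : ψ ∈ χ.subf) : ψ.subf ⊆ χ.subf := by
  induction χ with
  | atom a => simp [Formula.subf] at h; subst h; rfl
  | conj φ₁ φ₂ ih1 ih2 =>
    simp only [Formula.subf, Set.mem_insert_iff, Set.mem_union] at h
    rcases h with rfl | h | h
    · rfl
    · exact (ih1 h).trans (Set.subset_union_left.trans (Set.subset_insert _ _))
    · exact (ih2 h).trans (Set.subset_union_right.trans (Set.subset_insert _ _))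
  | disj φ₁ φ₂ ih1 ih2 =>
    simp only [Formula.subf, Set.mem_insert_iff, Set.mem_union] at h
    rcases h with rfl | h | h
    · rfl
    · exact (ih1 h).trans (Set.subset_union_left.trans (Set.subset_insert _ _))
    · exact (ih2 h).trans (Set.subset_union_right.trans (Set.subset_insert _ _))
  | impl φ₁ φ₂ ih1 ih2 =>
    simp only [Formula.subf, Set.mem_insert_iff, Set.mem_union] at h
    rcases h with rfl | h | h
    · rfl
    · exact (ih1 h).trans (Set.subset_union_left.trans (Set.subset_insert _ _))
    · exact (ih2 h).trans (Set.subset_union_right.trans (Set.subset_insert _ _))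
  | coimpl φ₁ φ₂ ih1 ih2 =>
    simp only [Formula.subf, Set.mem_insert_iff, Set.mem_union] at h
    rcases h with rfl | h | h
    · rfl
    · exact (ih1 h).trans (Set.subset_union_left.trans (Set.subset_insert _ _))
    · exact (ih2 h).trans (Set.subset_union_right.trans (Set.subset_insert _ _))

lemma subClosure_mem {Θ : Set Formula} {χ ψ : Formula} (hχ : χ ∈ subClosure Θ)
    (hψ : ψ ∈ χ.subf) : ψ ∈ subClosure Θ := by
  simp only [subClosure, Set.mem_iUnion] at hχ ⊢
  obtain ⟨θ, hθ, hc⟩ := hχ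
  exact ⟨θ, hθ, subf_trans hc hψ⟩

end Aux

open Aux in
lemma main (ΓF : Set Formula) (α : AtomicMapping ΓF) :
    ∀ φ, φ ∈ subClosure ΓF → ∀ B : Base, Adequate B → SimBase ΓF α.toFun ⊆ B →
    (Support B .pos φ ↔ AtDeriv B ∅ ∅ .pos (α.toFun φ)) ∧
    (Support B .neg φ ↔ AtDeriv B ∅ ∅ .neg (α.toFun φ)) := by
  intro φ
  induction φ with
  | atom a =>
    intro hφ B hB hU
    rw [α.fixAtom a hφ]
    constructor <;> rw [Support]
  | conj φ ψ ihφ ihψ =>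
    intro hφψ B hB hU
    have hφ : φ ∈ subClosure ΓF :=
      subClosure_mem hφψ (by simp [Formula.subf, self_mem_subf])
    have hψ : ψ ∈ subClosure ΓF :=
      subClosure_mem hφψ (by simp [Formula.subf, self_mem_subf])
    constructor
    · rw [Support]
      constructor
      · rintro ⟨h1, h2⟩
        refine AtDeriv.app (hU (SimRule.andIP hφψ)) fun pr hpr => ?_
        simp only [Sim.andIP, Sim.pp, List.mem_cons, List.mem_singleton, List.not_mem_nil,
          or_false] at hpr
        rcases hpr with rfl | rfl
        · simpa using (ihφ hφ B hB hU).1.mp h1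
        · simpa using (ihψ hψ B hB hU).1.mp h2
      · intro d
        refine ⟨(ihφ hφ B hB hU).1.mpr ?_, (ihψ hψ B hB hU).1.mpr ?_⟩
        · refine AtDeriv.app (hU (SimRule.andE1P hφψ)) fun pr hpr => ?_
          simp only [Sim.andE1P, Sim.pp, List.mem_singleton] at hpr
          subst hpr; simpa using d
        · refine AtDeriv.app (hU (SimRule.andE2P hφψ)) fun pr hpr => ?_
          simp only [Sim.andE2P, Sim.pp, List.mem_singleton] at hpr
          subst hpr; simpa using d
    · rw [Support]
      constructor
      · intro hsupp
        refine ((hsupp B hB (subset_refl B) (α.toFun (.conj φ ψ))).2 ?_ ?_)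
        · intro D hD hBD hs
          have hUD := hU.trans hBD
          refine AtDeriv.app (hUD (SimRule.andI1N hφψ)) fun pr hpr => ?_
          simp only [Sim.andI1N, Sim.pp, List.mem_singleton] at hpr
          subst hpr; simpa using (ihφ hφ D hD hUD).2.mp hs
        · intro D hD hBD hs
          have hUD := hU.trans hBD
          refine AtDeriv.app (hUD (SimRule.andI2N hφψ)) fun pr hpr => ?_
          simp only [Sim.andI2N, Sim.pp, List.mem_singleton] at hpr
          subst hpr; simpa using (ihψ hψ D hD hUD).2.mp hs
      · intro d C hC hBC p
        have hUC := hU.trans hBC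
        have key : ∀ s : Side,
            (∀ D : Base, Adequate D → C ⊆ D → Support D .neg φ → AtDeriv D ∅ ∅ s p) →
            (∀ D : Base, Adequate D → C ⊆ D → Support D .neg ψ → AtDeriv D ∅ ∅ s p) →
            AtDeriv C ∅ ∅ s p := by
          intro s H1 H2
          refine AtDeriv.app (hUC (SimRule.andEN hφψ s p)) fun pr hpr => ?_
          simp only [Sim.andEN, Sim.pp, List.mem_cons, List.mem_singleton, List.not_mem_nil,
            or_false] at hpr
          rcases hpr with rfl | rfl | rfl
          · simpa using AtDeriv.mono hBC (subset_refl _) (subset_refl _) d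
          · simpa using keyNeg hC hUC (a := α.toFun φ) fun D hD hCD hd =>
              H1 D hD hCD ((ihφ hφ D hD (hUC.trans hCD)).2.mpr hd)
          · simpa using keyNeg hC hUC (a := α.toFun ψ) fun D hD hCD hd =>
              H2 D hD hCD ((ihψ hψ D hD (hUC.trans hCD)).2.mpr hd)
        exact ⟨key .pos, key .neg⟩
  | disj φ ψ ihφ ihψ =>
    intro hφψ B hB hU
    have hφ : φ ∈ subClosure ΓF :=
      subClosure_mem hφψ (by simp [Formula.subf, self_mem_subf])
    have hψ : ψ ∈ subClosure ΓF :=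
      subClosure_mem hφψ (by simp [Formula.subf, self_mem_subf])
    constructor
    · rw [Support]
      constructor
      · intro hsupp
        refine ((hsupp B hB (subset_refl B) (α.toFun (.disj φ ψ))).1 ?_ ?_)
        · intro D hD hBD hs
          have hUD := hU.trans hBD
          refine AtDeriv.app (hUD (SimRule.orI1P hφψ)) fun pr hpr => ?_
          simp only [Sim.orI1P, Sim.pp, List.mem_singleton] at hpr
          subst hpr; simpa using (ihφ hφ D hD hUD).1.mp hs
        · intro D hD hBD hs
          have hUD := hU.trans hBD
          refine AtDeriv.app (hUD (SimRule.orI2P hφψ)) fun pr hpr => ?_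
          simp only [Sim.orI2P, Sim.pp, List.mem_singleton] at hpr
          subst hpr; simpa using (ihψ hψ D hD hUD).1.mp hs
      · intro d C hC hBC p
        have hUC := hU.trans hBC
        have key : ∀ s : Side,
            (∀ D : Base, Adequate D → C ⊆ D → Support D .pos φ → AtDeriv D ∅ ∅ s p) →
            (∀ D : Base, Adequate D → C ⊆ D → Support D .pos ψ → AtDeriv D ∅ ∅ s p) →
            AtDeriv C ∅ ∅ s p := by
          intro s H1 H2
          refine AtDeriv.app (hUC (SimRule.orEP hφψ s p)) fun pr hpr => ?_
          simp only [Sim.orEP, Sim.pp, List.mem_cons, List.mem_singleton, List.not_mem_nil,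
            or_false] at hpr
          rcases hpr with rfl | rfl | rfl
          · simpa using AtDeriv.mono hBC (subset_refl _) (subset_refl _) d
          · simpa using keyPos hC hUC (a := α.toFun φ) fun D hD hCD hd =>
              H1 D hD hCD ((ihφ hφ D hD (hUC.trans hCD)).1.mpr hd)
          · simpa using keyPos hC hUC (a := α.toFun ψ) fun D hD hCD hd =>
              H2 D hD hCD ((ihψ hψ D hD (hUC.trans hCD)).1.mpr hd)
        exact ⟨key .pos, key .neg⟩
    · rw [Support]
      constructor
      · rintro ⟨h1, h2⟩
        refine AtDeriv.app (hU (SimRule.orIN hφψ)) fun pr hpr => ?_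
        simp only [Sim.orIN, Sim.pp, List.mem_cons, List.mem_singleton, List.not_mem_nil,
          or_false] at hpr
        rcases hpr with rfl | rfl
        · simpa using (ihφ hφ B hB hU).2.mp h1
        · simpa using (ihψ hψ B hB hU).2.mp h2
      · intro d
        refine ⟨(ihφ hφ B hB hU).2.mpr ?_, (ihψ hψ B hB hU).2.mpr ?_⟩
        · refine AtDeriv.app (hU (SimRule.orE1N hφψ)) fun pr hpr => ?_
          simp only [Sim.orE1N, Sim.pp, List.mem_singleton] at hpr
          subst hpr; simpa using d
        · refine AtDeriv.app (hU (SimRule.orE2N hφψ)) fun pr hpr => ?_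
          simp only [Sim.orE2N, Sim.pp, List.mem_singleton] at hpr
          subst hpr; simpa using d
  | impl φ ψ ihφ ihψ =>
    intro hφψ B hB hU
    have hφ : φ ∈ subClosure ΓF :=
      subClosure_mem hφψ (by simp [Formula.subf, self_mem_subf])
    have hψ : ψ ∈ subClosure ΓF :=
      subClosure_mem hφψ (by simp [Formula.subf, self_mem_subf])
    constructor
    · rw [Support]
      constructor
      · intro hsupp
        refine AtDeriv.app (hU (SimRule.impIP hφψ)) fun pr hpr => ?_
        simp only [Sim.impIP, List.mem_singleton] at hpr
        subst hpr
        simpa using keyPos hB hU (a := α.toFun φ) fun D hD hBD hd =>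
          (ihψ hψ D hD (hU.trans hBD)).1.mp
            (hsupp D hD hBD ((ihφ hφ D hD (hU.trans hBD)).1.mpr hd))
      · intro d C hC hBC hsφ
        have hUC := hU.trans hBC
        refine (ihψ hψ C hC hUC).1.mpr ?_
        refine AtDeriv.app (hUC (SimRule.impEP hφψ)) fun pr hpr => ?_
        simp only [Sim.impEP, Sim.pp, List.mem_cons, List.mem_singleton, List.not_mem_nil,
          or_false] at hpr
        rcases hpr with rfl | rfl
        · simpa using AtDeriv.mono hBC (subset_refl _) (subset_refl _) d
        · simpa using (ihφ hφ C hC hUC).1.mp hsφ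
    · rw [Support]
      constructor
      · rintro ⟨h1, h2⟩
        refine AtDeriv.app (hU (SimRule.impIN hφψ)) fun pr hpr => ?_
        simp only [Sim.impIN, Sim.pp, List.mem_cons, List.mem_singleton, List.not_mem_nil,
          or_false] at hpr
        rcases hpr with rfl | rfl
        · simpa using (ihφ hφ B hB hU).1.mp h1
        · simpa using (ihψ hψ B hB hU).2.mp h2
      · intro d
        refine ⟨(ihφ hφ B hB hU).1.mpr ?_, (ihψ hψ B hB hU).2.mpr ?_⟩
        · refine AtDeriv.app (hU (SimRule.impE1N hφψ)) fun pr hpr => ?_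
          simp only [Sim.impE1N, Sim.pp, List.mem_singleton] at hpr
          subst hpr; simpa using d
        · refine AtDeriv.app (hU (SimRule.impE2N hφψ)) fun pr hpr => ?_
          simp only [Sim.impE2N, Sim.pp, List.mem_singleton] at hpr
          subst hpr; simpa using d
  | coimpl φ ψ ihφ ihψ =>
    intro hφψ B hB hU
    have hφ : φ ∈ subClosure ΓF :=
      subClosure_mem hφψ (by simp [Formula.subf, self_mem_subf])
    have hψ : ψ ∈ subClosure ΓF :=
      subClosure_mem hφψ (by simp [Formula.subf, self_mem_subf])
    constructor
    · rw [Support]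
      constructor
      · rintro ⟨h1, h2⟩
        refine AtDeriv.app (hU (SimRule.coimpIP hφψ)) fun pr hpr => ?_
        simp only [Sim.coimpIP, Sim.pp, List.mem_cons, List.mem_singleton, List.not_mem_nil,
          or_false] at hpr
        rcases hpr with rfl | rfl
        · simpa using (ihφ hφ B hB hU).1.mp h1
        · simpa using (ihψ hψ B hB hU).2.mp h2
      · intro d
        refine ⟨(ihφ hφ B hB hU).1.mpr ?_, (ihψ hψ B hB hU).2.mpr ?_⟩
        · refine AtDeriv.app (hU (SimRule.coimpE1P hφψ)) fun pr hpr => ?_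
          simp only [Sim.coimpE1P, Sim.pp, List.mem_singleton] at hpr
          subst hpr; simpa using d
        · refine AtDeriv.app (hU (SimRule.coimpE2P hφψ)) fun pr hpr => ?_
          simp only [Sim.coimpE2P, Sim.pp, List.mem_singleton] at hpr
          subst hpr; simpa using d
    · rw [Support]
      constructor
      · intro hsupp
        refine AtDeriv.app (hU (SimRule.coimpIN hφψ)) fun pr hpr => ?_
        simp only [Sim.coimpIN, List.mem_singleton] at hpr
        subst hpr
        simpa using keyNeg hB hU (a := α.toFun ψ) fun D hD hBD hd =>
          (ihφ hφ D hD (hU.trans hBD)).2.mp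
            (hsupp D hD hBD ((ihψ hψ D hD (hU.trans hBD)).2.mpr hd))
      · intro d C hC hBC hsψ
        have hUC := hU.trans hBC
        refine (ihφ hφ C hC hUC).2.mpr ?_
        refine AtDeriv.app (hUC (SimRule.coimpEN hφψ)) fun pr hpr => ?_
        simp only [Sim.coimpEN, Sim.pp, List.mem_cons, List.mem_singleton, List.not_mem_nil,
          or_false] at hpr
        rcases hpr with rfl | rfl
        · simpa using AtDeriv.mono hBC (subset_refl _) (subset_refl _) d
        · simpa using (ihψ hψ C hC hUC).2.mp hsψ

/-- Let `φ ∈ Γ^Sub`, let `α` be an atomic mapping for `Γ^Sub`, and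
let `U` be the simulation base determined by `α`. Then for every epistemically
adequate base `B` extending `U`: `⊩⁺_B φ` iff `⊢⁺_B p^φ`, and `⊩⁻_B φ` iff
`⊢⁻_B p^φ`. -/
theorem simulation_support_iff_derivability (Γ : Set Formula) (φ : Formula)
    (hφ : φ ∈ subClosure Γ) (α : AtomicMapping Γ)
    (B : Base) (hB : Adequate B) (hUB : SimBase Γ α.toFun ⊆ B) :
    (Support B .pos φ ↔ AtDeriv B ∅ ∅ .pos (α.toFun φ)) ∧
    (Support B .neg φ ↔ AtDeriv B ∅ ∅ .neg (α.toFun φ)) := by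
  exact main Γ α φ hφ B hB hUB
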